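/- arXiv:math/0401353 — 8 statements merged into one kernel-verified Lean document; each statement's English description precedes it below -/
import Mathlib

section
/- Fix reals λ1 > 0, λ2 > 0, γ > 0 and let F be the mean-field vector field of the multitype contact process with frozen states. Then F has a fixed point u ∈ Ω with u2 = 0 and u ≠ (1,0,0,0) if and only if λ1 > 1. -/
/-- The mean-field vector field of the multitype contact process with frozen
states, with coordinates `u = (u 0, u 1, u 2, u 3)`. -/
def meanField (l1 l2 g : ℝ) (u : Fin 4 → ℝ) : Fin 4 → ℝ :=
  ![u 2 + g * u 3 - l1 * u 0 * u 1 - l2 * u 0 * u 2,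
    l1 * u 0 * u 1 + l1 * u 1 * u 3 - u 1,
    l2 * u 0 * u 2 - u 2,
    u 1 - l1 * u 1 * u 3 - g * u 3]

/-- The simplex `Ω` of admissible densities. -/
def Omega : Set (Fin 4 → ℝ) :=
  {u | (∀ i, 0 ≤ u i) ∧ u 0 + u 1 + u 2 + u 3 = 1}

theorem boundary_fixed_point_iff (l1 l2 g : ℝ)
    (hl1 : 0 < l1) (hl2 : 0 < l2) (hg : 0 < g) :
    (∃ u ∈ Omega, meanField l1 l2 g u = 0 ∧ u 2 = 0 ∧ u ≠ ![1, 0, 0, 0]) ↔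
      1 < l1 := by
  constructor
  · rintro ⟨u, ⟨hpos, hsum⟩, hF, h2, hne⟩
    have e1 := congrFun hF 1
    have e3 := congrFun hF 3
    simp [meanField] at e1 e3
    rcases eq_or_lt_of_le (hpos 1) with hb | hb
    · -- u 1 = 0 forces the trivial point
      exfalso
      rw [← hb] at e3
      simp at e3
      have hc : u 3 = 0 := by
        rcases e3 with h | h
        · exact absurd h hg.ne'
        · exact h
      have ha : u 0 = 1 := by rw [h2, ← hb, hc] at hsum; linarith
      apply hne
      funext i
      fin_cases i <;> simp [ha, ← hb, h2, hc]
    · have key : l1 * (u 0 + u 3) = 1 := by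
        have : u 1 * (l1 * (u 0 + u 3) - 1) = 0 := by nlinarith
        rcases mul_eq_zero.mp this with h | h
        · exact absurd h hb.ne'
        · linarith
      nlinarith [hpos 0, hpos 3]
  · intro hl
    obtain ⟨b, hbdef⟩ : ∃ b : ℝ, b = 1 - 1 / l1 := ⟨_, rfl⟩
    have hb : (0:ℝ) < b := by
      have h1 : 1 / l1 < 1 := by rw [div_lt_one hl1]; exact hl
      linarith [hbdef.ge, hbdef.le]
    have hd : (0:ℝ) < g + l1 * b := by positivity
    obtain ⟨c, hcdef⟩ : ∃ c : ℝ, c = b / (g + l1 * b) := ⟨_, rfl⟩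
    have hc : 0 < c := by rw [hcdef]; positivity
    have hcb : c * (g + l1 * b) = b := by rw [hcdef]; exact div_mul_cancel₀ _ hd.ne'
    have hcl : c < 1 / l1 := by
      rw [hcdef, div_lt_div_iff₀ hd hl1]
      nlinarith
    have hinv : l1 * l1⁻¹ = 1 := mul_inv_cancel₀ hl1.ne'
    refine ⟨![1 / l1 - c, b, 0, c], ⟨?_, ?_⟩, ?_, ?_, ?_⟩
    · intro i
      fin_cases i
      · show (0:ℝ) ≤ 1 / l1 - c
        linarith
      · simp; linarith
      · simp
      · simp; linarith
    · simp [one_div]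
      rw [← one_div]; linarith [hbdef.le, hbdef.ge]
    · funext i
      fin_cases i <;> simp [meanField, one_div]
      · linear_combination hcb - b * hinv
      · linear_combination b * hinv
      · linear_combination -hcb
    · simp
    · intro h
      have := congrFun h 1
      simp at this
      linarith
end

section
/- Fix reals λ2 > 0, γ > 0 and suppose λ1 > 1. Then the point ū = ( γ/(λ1(γ+λ1−1)), (λ1−1)/λ1, 0, (λ1−1)/(λ1(γ+λ1−1)) ) belongs to Ω, satisfies F(ū) = 0, and moreover ū is the unique point u ∈ Ω with F(u) = 0, u2 = 0 and u ≠ (1,0,0,0). -/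
theorem Fin.four_eq_vecCons {α : Type*} {u : Fin 4 → α} {a b c d : α}
    (h0 : u 0 = a) (h1 : u 1 = b) (h2 : u 2 = c) (h3 : u 3 = d) : u = ![a, b, c, d] :=
  calc u = ![u 0, u 1, u 2, u 3] := (FinVec.etaExpand_eq u).symm
    _ = ![a, b, c, d] := by rw [h0, h1, h2, h3]

noncomputable def boundaryFixedPoint (l1 g : ℝ) : Fin 4 → ℝ :=
  ![g / (l1 * (g + l1 - 1)), (l1 - 1) / l1, 0, (l1 - 1) / (l1 * (g + l1 - 1))]

section

variable {l1 l2 g : ℝ} {u : Fin 4 → ℝ}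

theorem meanField_one :
    meanField l1 l2 g u 1 = u 1 * (l1 * (u 0 + u 3) - 1) := by
  simp only [meanField, Matrix.cons_val]
  ring

theorem meanField_three :
    meanField l1 l2 g u 3 = u 1 - u 3 * (l1 * u 1 + g) := by
  simp only [meanField, Matrix.cons_val]
  ring

theorem boundaryFixedPoint_mem_Omega (hl1 : 1 < l1) (hg : 0 < g) :
    boundaryFixedPoint l1 g ∈ Omega := by
  have hl1' : 0 ≤ l1 - 1 := by linarith
  have hD : 0 < g + l1 - 1 := by linarith
  refine ⟨fun i => ?_, ?_⟩
  · fin_cases i <;> simp only [boundaryFixedPoint, Fin.zero_eta, Fin.mk_one, Fin.reduceFinMk,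
      Matrix.cons_val] <;> positivity
  · simp only [boundaryFixedPoint, Matrix.cons_val]
    field_simp
    ring

theorem meanField_boundaryFixedPoint (hl1 : l1 ≠ 0) (hD : g + l1 - 1 ≠ 0) :
    meanField l1 l2 g (boundaryFixedPoint l1 g) = 0 := by
  funext i
  fin_cases i <;> simp only [meanField, boundaryFixedPoint, Matrix.cons_val, Fin.zero_eta,
    Fin.mk_one, Fin.reduceFinMk, Pi.zero_apply] <;> field_simp <;> ring

theorem eq_boundaryFixedPoint_of_meanField_eq_zero (hl1 : l1 ≠ 0) (hD : g + l1 - 1 ≠ 0)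
    (hsum : u 0 + u 1 + u 3 = 1) (h2 : u 2 = 0) (h1 : u 1 ≠ 0)
    (hF1 : meanField l1 l2 g u 1 = 0) (hF3 : meanField l1 l2 g u 3 = 0) :
    u = boundaryFixedPoint l1 g := by
  rw [meanField_one] at hF1
  rw [meanField_three] at hF3
  have h03 : l1 * (u 0 + u 3) = 1 := by
    linarith [(mul_eq_zero.mp hF1).resolve_left h1]
  have hu1 : u 1 = (l1 - 1) / l1 := by
    field_simp
    linear_combination l1 * hsum - h03
  have hu3 : u 3 = (l1 - 1) / (l1 * (g + l1 - 1)) := by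
    rw [hu1, mul_div_cancel₀ _ hl1] at hF3
    field_simp at hF3 ⊢
    linear_combination -hF3
  have hu0 : u 0 = g / (l1 * (g + l1 - 1)) := by
    rw [show u 0 = 1 - u 1 - u 3 by linarith, hu1, hu3]
    field_simp
    ring
  exact Fin.four_eq_vecCons hu0 hu1 h2 hu3

theorem eq_trivial_of_meanField_eq_zero (hg : g ≠ 0) (hsum : u 0 + u 1 + u 3 = 1)
    (h2 : u 2 = 0) (h1 : u 1 = 0) (hF3 : meanField l1 l2 g u 3 = 0) : u = ![1, 0, 0, 0] := by
  rw [meanField_three, h1] at hF3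
  have h3 : u 3 = 0 := by
    simpa [hg] using hF3
  exact Fin.four_eq_vecCons (by linarith) h1 h2 h3

end

theorem boundary_fixed_point_unique_general (l1 l2 g : ℝ)
    (hl1 : 1 < l1) (hg : 0 < g) :
    let ubar : Fin 4 → ℝ :=
      ![g / (l1 * (g + l1 - 1)), (l1 - 1) / l1, 0,
        (l1 - 1) / (l1 * (g + l1 - 1))]
    ubar ∈ Omega ∧ meanField l1 l2 g ubar = 0 ∧
      ∀ u ∈ Omega, meanField l1 l2 g u = 0 → u 2 = 0 →
        u ≠ ![1, 0, 0, 0] → u = ubar := by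
  have hl1₀ : l1 ≠ 0 := (zero_lt_one.trans hl1).ne'
  have hD : g + l1 - 1 ≠ 0 := by linarith
  refine ⟨boundaryFixedPoint_mem_Omega hl1 hg, meanField_boundaryFixedPoint hl1₀ hD,
    fun u ⟨_, hsum⟩ hF h2 hne => ?_⟩
  rw [h2, add_zero] at hsum
  by_cases h1 : u 1 = 0
  · exact absurd (eq_trivial_of_meanField_eq_zero hg.ne' hsum h2 h1 (congrFun hF 3)) hne
  · exact eq_boundaryFixedPoint_of_meanField_eq_zero hl1₀ hD hsum h2 h1
      (congrFun hF 1) (congrFun hF 3)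

theorem boundary_fixed_point_unique (l1 l2 g : ℝ)
    (hl1 : 1 < l1) (hl2 : 0 < l2) (hg : 0 < g) :
    let ubar : Fin 4 → ℝ :=
      ![g / (l1 * (g + l1 - 1)), (l1 - 1) / l1, 0,
        (l1 - 1) / (l1 * (g + l1 - 1))]
    ubar ∈ Omega ∧ meanField l1 l2 g ubar = 0 ∧
      ∀ u ∈ Omega, meanField l1 l2 g u = 0 → u 2 = 0 →
        u ≠ ![1, 0, 0, 0] → u = ubar :=
  boundary_fixed_point_unique_general l1 l2 g hl1 hg
end

section
/- Fix reals λ2 > 0, γ > 0 and suppose λ1 > 1. All eigenvalues of the Jacobian matrix of the reduced mean-field vector field G at the point ((λ1−1)/λ1, 0, (λ1−1)/(λ1(γ+λ1−1))) (the reduced coordinates of the boundary equilibrium ū) are negative real numbers if and only if γλ2 < λ1(λ1+γ−1); and if γλ2 > λ1(λ1+γ−1), then this Jacobian matrix has a positive real eigenvalue. -/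
open Polynomial

/-- The reduced mean-field vector field, obtained by substituting
`u0 = 1 - u1 - u2 - u3` into `(F1, F2, F3)`; here `u 0, u 1, u 2`
stand for the coordinates `u1, u2, u3`. -/
def reducedMeanField (l1 l2 g : ℝ) (u : Fin 3 → ℝ) : Fin 3 → ℝ :=
  ![l1 * (1 - u 0 - u 1 - u 2) * u 0 + l1 * u 0 * u 2 - u 0,
    l2 * (1 - u 0 - u 1 - u 2) * u 1 - u 1,
    u 0 - l1 * u 0 * u 2 - g * u 2]

/-- The Jacobian matrix of a map `ℝ³ → ℝ³` at a point. -/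
noncomputable def jacobian (f : (Fin 3 → ℝ) → Fin 3 → ℝ) (p : Fin 3 → ℝ) :
    Matrix (Fin 3) (Fin 3) ℝ :=
  fun i j => fderiv ℝ f p (Pi.single j 1) i

open ContinuousLinearMap in
lemma jac_eq (l1 l2 g : ℝ) (hl1 : 1 < l1) (hg : 0 < g) :
    jacobian (reducedMeanField l1 l2 g)
      ![(l1 - 1) / l1, 0, (l1 - 1) / (l1 * (g + l1 - 1))] =
    !![1 - l1, -(l1 - 1), 0;
       0, g * l2 / (l1 * (g + l1 - 1)) - 1, 0;
       1 - l1 * ((l1 - 1) / (l1 * (g + l1 - 1))), 0, -(g + l1 - 1)] := by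
  have hl0 : l1 ≠ 0 := by linarith
  have hgl : g + l1 - 1 ≠ 0 := by linarith
  set p : Fin 3 → ℝ := ![(l1 - 1) / l1, 0, (l1 - 1) / (l1 * (g + l1 - 1))] with hp
  have h0 := hasFDerivAt_apply (𝕜 := ℝ) (0 : Fin 3) p
  have h1 := hasFDerivAt_apply (𝕜 := ℝ) (1 : Fin 3) p
  have h2 := hasFDerivAt_apply (𝕜 := ℝ) (2 : Fin 3) p
  have hw := (((hasFDerivAt_const (1:ℝ) p).sub h0).sub h1).sub h2
  have hc0 : HasFDerivAt (fun u : Fin 3 → ℝ =>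
      l1 * (1 - u 0 - u 1 - u 2) * u 0 + l1 * u 0 * u 2 - u 0) _ p :=
    ((hw.const_mul l1).mul h0).add ((h0.const_mul l1).mul h2) |>.sub h0
  have hc1 : HasFDerivAt (fun u : Fin 3 → ℝ =>
      l2 * (1 - u 0 - u 1 - u 2) * u 1 - u 1) _ p :=
    ((hw.const_mul l2).mul h1).sub h1
  have hc2 : HasFDerivAt (fun u : Fin 3 → ℝ =>
      u 0 - l1 * u 0 * u 2 - g * u 2) _ p :=
    (h0.sub ((h0.const_mul l1).mul h2)).sub (h2.const_mul g)
  have hdiff : ∀ i, DifferentiableAt ℝ (fun u => reducedMeanField l1 l2 g u i) p := by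
    intro i
    fin_cases i <;> simp only [reducedMeanField, Fin.zero_eta, Fin.mk_one, Fin.reduceFinMk,
      Matrix.cons_val_zero, Matrix.cons_val_one,
      Matrix.head_cons, Matrix.cons_val_two, Matrix.tail_cons, Fin.isValue]
    · exact hc0.differentiableAt
    · exact hc1.differentiableAt
    · exact hc2.differentiableAt
  funext i j
  have : jacobian (reducedMeanField l1 l2 g) p i j
      = fderiv ℝ (fun u => reducedMeanField l1 l2 g u i) p (Pi.single j 1) := by
    simp only [jacobian, fderiv_pi hdiff, ContinuousLinearMap.pi_apply]
  rw [this]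
  fin_cases i <;>
    simp only [reducedMeanField, Fin.zero_eta, Fin.mk_one, Fin.reduceFinMk,
      Matrix.cons_val_zero, Matrix.cons_val_one,
      Matrix.head_cons, Matrix.cons_val_two, Matrix.tail_cons, Fin.isValue]
  · rw [hc0.fderiv]
    fin_cases j <;>
      simp [hp, Pi.single_apply, Matrix.cons_val_zero, Matrix.cons_val_one] <;>
      field_simp <;> ring
  · rw [hc1.fderiv]
    fin_cases j <;>
      simp [hp, Pi.single_apply] <;> field_simp <;> ring
  · rw [hc2.fderiv]
    fin_cases j <;>
      simp [hp, Pi.single_apply] <;> field_simp <;> ring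

theorem stability_at_ubar (l1 l2 g : ℝ)
    (hl1 : 1 < l1) (hl2 : 0 < l2) (hg : 0 < g) :
    let J := jacobian (reducedMeanField l1 l2 g)
      ![(l1 - 1) / l1, 0, (l1 - 1) / (l1 * (g + l1 - 1))]
    ((∀ z : ℂ, (J.charpoly.map (algebraMap ℝ ℂ)).IsRoot z →
        ∃ r : ℝ, z = (r : ℂ) ∧ r < 0) ↔ g * l2 < l1 * (l1 + g - 1)) ∧
      (g * l2 > l1 * (l1 + g - 1) →
        ∃ r : ℝ, 0 < r ∧ J.charpoly.IsRoot r) := by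
  intro J
  have hl0 : (0:ℝ) < l1 := by linarith
  have hgl : (0:ℝ) < g + l1 - 1 := by linarith
  have hpos : (0:ℝ) < l1 * (g + l1 - 1) := mul_pos hl0 hgl
  set r2 : ℝ := g * l2 / (l1 * (g + l1 - 1)) - 1 with hr2
  have hJ : J = !![1 - l1, -(l1 - 1), 0;
       0, g * l2 / (l1 * (g + l1 - 1)) - 1, 0;
       1 - l1 * ((l1 - 1) / (l1 * (g + l1 - 1))), 0, -(g + l1 - 1)] :=
    jac_eq l1 l2 g hl1 hg
  have hcp : J.charpoly
      = (X - C (1 - l1)) * (X - C r2) * (X - C (-(g + l1 - 1))) := by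
    rw [hJ, Matrix.charpoly, Matrix.det_fin_three]
    simp [Matrix.charmatrix_apply, Matrix.one_apply, hr2]
  have hring : l1 * (l1 + g - 1) = l1 * (g + l1 - 1) := by ring
  have hroot : ∀ z : ℂ, (J.charpoly.map (algebraMap ℝ ℂ)).IsRoot z ↔
      (z = ((1 - l1 : ℝ) : ℂ) ∨ z = (r2 : ℂ) ∨ z = ((-(g + l1 - 1) : ℝ) : ℂ)) := by
    intro z
    rw [hcp]
    simp only [Polynomial.map_mul, Polynomial.map_sub, Polynomial.map_X, Polynomial.map_C,
      IsRoot, eval_mul, eval_sub, eval_X, eval_C, mul_eq_zero, sub_eq_zero]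
    simp [algebraMap]
    tauto
  constructor
  · constructor
    · intro h
      obtain ⟨r, hzr, hrneg⟩ := h (r2 : ℂ) ((hroot _).2 (Or.inr (Or.inl rfl)))
      have hr : r2 = r := by exact_mod_cast hzr
      have h2 : r2 < 0 := hr ▸ hrneg
      rw [hr2] at h2
      have := (div_lt_one hpos).1 (sub_neg.mp h2)
      rw [hring]
      linarith
    · intro hlt z hz
      rcases (hroot z).1 hz with h | h | h
      · exact ⟨1 - l1, h, by linarith⟩
      · refine ⟨r2, h, ?_⟩
        rw [hr2]
        exact sub_neg.mpr ((div_lt_one hpos).2 (by rw [← hring]; linarith))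
      · exact ⟨-(g + l1 - 1), h, by linarith⟩
  · intro hgt
    refine ⟨r2, ?_, ?_⟩
    · rw [hr2]
      exact sub_pos.mpr ((one_lt_div hpos).2 (by rw [← hring]; linarith))
    · rw [hcp]
      simp [IsRoot]
end

section
/- Fix reals λ1 > 0, γ > 0. The mean-field vector field F has a fixed point u ∈ Ω with u1 = 0, u3 = 0 and u ≠ (1,0,0,0) if and only if λ2 > 1; and when λ2 > 1, the unique such fixed point is v̄ = (1/λ2, 0, 1 − 1/λ2, 0). -/
theorem red_boundary_fixed_point (l1 g : ℝ) (hl1 : 0 < l1) (hg : 0 < g) :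
    ∀ l2 : ℝ, 0 < l2 →
      ((∃ u ∈ Omega, meanField l1 l2 g u = 0 ∧ u 1 = 0 ∧ u 3 = 0 ∧
          u ≠ ![1, 0, 0, 0]) ↔ 1 < l2) ∧
      (1 < l2 → ∀ u : Fin 4 → ℝ,
        (u ∈ Omega ∧ meanField l1 l2 g u = 0 ∧ u 1 = 0 ∧ u 3 = 0 ∧
          u ≠ ![1, 0, 0, 0]) ↔ u = ![1 / l2, 0, 1 - 1 / l2, 0]) := by
  intro l2 hl2
  have hl2ne : l2 ≠ 0 := ne_of_gt hl2
  have key : ∀ u : Fin 4 → ℝ,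
      (u ∈ Omega ∧ meanField l1 l2 g u = 0 ∧ u 1 = 0 ∧ u 3 = 0 ∧ u ≠ ![1,0,0,0]) →
      1 < l2 ∧ u = ![1 / l2, 0, 1 - 1 / l2, 0] := by
    rintro u ⟨⟨hpos, hsum⟩, hF, h1, h3, hne⟩
    have hF2 : l2 * u 0 * u 2 - u 2 = 0 := by
      have := congrFun hF 2
      simpa [meanField] using this
    have h2ne : u 2 ≠ 0 := by
      intro h2
      apply hne
      have h0 : u 0 = 1 := by linarith
      funext i; fin_cases i <;> simp [h0, h1, h2, h3]
    have h2pos : 0 < u 2 := lt_of_le_of_ne (hpos 2) (Ne.symm h2ne)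
    have hu0 : l2 * u 0 = 1 := by
      have h : (l2 * u 0 - 1) * u 2 = 0 := by nlinarith [hF2]
      rcases mul_eq_zero.1 h with h | h
      · linarith
      · exact absurd h h2ne
    have hu0' : u 0 = 1 / l2 := by
      field_simp
      linarith
    have hu2 : u 2 = 1 - 1/l2 := by rw [hu0'] at hsum; linarith
    have hlt : 1 < l2 := by
      have hp : 0 < 1 - 1/l2 := hu2 ▸ h2pos
      by_contra hle
      push_neg at hle
      have : 1 ≤ 1/l2 := by rw [le_div_iff₀ hl2]; linarith
      linarith
    refine ⟨hlt, ?_⟩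
    funext i; fin_cases i <;> simp [hu0', h1, hu2, h3]
  have vbar : ∀ hl2' : 1 < l2,
      (![1/l2, 0, 1 - 1/l2, 0] : Fin 4 → ℝ) ∈ Omega ∧
      meanField l1 l2 g ![1/l2, 0, 1 - 1/l2, 0] = 0 ∧
      (![1/l2, 0, 1 - 1/l2, 0] : Fin 4 → ℝ) 1 = 0 ∧
      (![1/l2, 0, 1 - 1/l2, 0] : Fin 4 → ℝ) 3 = 0 ∧
      (![1/l2, 0, 1 - 1/l2, 0] : Fin 4 → ℝ) ≠ ![1, 0, 0, 0] := by
    intro hl2'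
    have hinv : 1/l2 < 1 := by rw [div_lt_one hl2]; exact hl2'
    have hinvpos : 0 < 1/l2 := by positivity
    rw [one_div] at hinv hinvpos
    refine ⟨⟨?_, by simp⟩, ?_, by simp, by simp, ?_⟩
    · intro i; fin_cases i <;> simp <;> linarith
    · funext i; fin_cases i <;> simp [meanField] <;> field_simp <;> ring
    · intro h
      have := congrFun h 0
      simp at this
      linarith
  constructor
  · constructor
    · rintro ⟨u, hu, hrest⟩
      exact (key u ⟨hu, hrest⟩).1
    · intro hl2'
      obtain ⟨ha, hb, hc, hd, he⟩ := vbar hl2'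
      exact ⟨_, ha, hb, hc, hd, he⟩
  · intro hl2' u
    constructor
    · intro h; exact (key u h).2
    · rintro rfl
      obtain ⟨ha, hb, hc, hd, he⟩ := vbar hl2'
      exact ⟨ha, hb, hc, hd, he⟩
end

section
/- Fix reals λ1 > 0, γ > 0 and suppose λ2 > 1. All eigenvalues of the Jacobian matrix of the reduced mean-field vector field G at the point (0, 1 − 1/λ2, 0) (the reduced coordinates of the equilibrium v̄) are negative real numbers if and only if λ2 > λ1; and if λ1 > λ2, then this Jacobian matrix has a positive real eigenvalue. -/
open Polynomial

/-!
At `(0, 1 - 1/λ2, 0)` the Jacobian of the reduced field is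
`!![λ1/λ2 - 1, 0, 0; 1 - λ2, 1 - λ2, 1 - λ2; 1, 0, -γ]`, which becomes lower triangular after
swapping the last two coordinates. Its eigenvalues are therefore `λ1/λ2 - 1`, `1 - λ2 < 0` and
`-γ < 0`, and the sign of `λ1/λ2 - 1` decides stability.
-/

theorem jacobian_apply_of_hasFDerivAt {f : (Fin 3 → ℝ) → Fin 3 → ℝ} {p : Fin 3 → ℝ} (i : Fin 3)
    {L : (Fin 3 → ℝ) →L[ℝ] ℝ} (hf : DifferentiableAt ℝ f p)
    (hi : HasFDerivAt (fun u => f u i) L p) (j : Fin 3) :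
    jacobian f p i j = L (Pi.single j 1) := by
  show fderiv ℝ f p (Pi.single j 1) i = _
  rw [← (hasFDerivAt_pi'.1 hf.hasFDerivAt i).unique hi]
  rfl

theorem differentiable_reducedMeanField (l1 l2 g : ℝ) :
    Differentiable ℝ (reducedMeanField l1 l2 g) := by
  refine differentiable_pi.2 fun i => ?_
  fin_cases i <;> simp [reducedMeanField] <;> fun_prop

theorem jacobian_reducedMeanField (l1 l2 g : ℝ) (u : Fin 3 → ℝ) :
    jacobian (reducedMeanField l1 l2 g) u =
      !![l1 * (1 - 2 * u 0 - u 1) - 1, -(l1 * u 0), 0;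
        -(l2 * u 1), l2 * (1 - u 0 - 2 * u 1 - u 2) - 1, -(l2 * u 1);
        1 - l1 * u 2, 0, -(l1 * u 0) - g] := by
  have d (k : Fin 3) := hasFDerivAt_apply (𝕜 := ℝ) k u
  have hu0 := (((hasFDerivAt_const (1 : ℝ) u).sub (d 0)).sub (d 1)).sub (d 2)
  have hG := differentiable_reducedMeanField l1 l2 g u
  ext i j
  fin_cases i
  · refine (jacobian_apply_of_hasFDerivAt 0 hG
      ((((hu0.const_mul l1).mul (d 0)).add (((d 0).const_mul l1).mul (d 2))).sub (d 0)) j).trans ?_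
    fin_cases j <;> simp <;> ring
  · refine (jacobian_apply_of_hasFDerivAt 1 hG (((hu0.const_mul l2).mul (d 1)).sub (d 1)) j).trans ?_
    fin_cases j <;> simp <;> ring
  · refine (jacobian_apply_of_hasFDerivAt 2 hG
      (((d 0).sub (((d 0).const_mul l1).mul (d 2))).sub ((d 2).const_mul g)) j).trans ?_
    fin_cases j <;> simp [mul_comm]

theorem Matrix.charpoly_fin_three_of_eq_zero {R : Type*} [CommRing R]
    (M : Matrix (Fin 3) (Fin 3) R) (h01 : M 0 1 = 0) (h02 : M 0 2 = 0) (h21 : M 2 1 = 0) :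
    M.charpoly = (X - C (M 0 0)) * (X - C (M 1 1)) * (X - C (M 2 2)) := by
  rw [Matrix.charpoly, Matrix.det_fin_three]
  simp [h01, h02, h21]

theorem Polynomial.isRoot_map_prod_X_sub_C_neg_real_iff (s : Multiset ℝ) :
    (∀ z : ℂ, ((s.map fun a => X - C a).prod.map (algebraMap ℝ ℂ)).IsRoot z →
        ∃ r : ℝ, z = (r : ℂ) ∧ r < 0) ↔ ∀ a ∈ s, a < 0 := by
  simp only [Polynomial.map_multiset_prod, Multiset.map_map, Function.comp_apply, Polynomial.map_sub, map_X,
    map_C, Complex.coe_algebraMap, IsRoot.def, eval_multiset_prod, eval_sub, eval_X, eval_C, Multiset.prod_eq_zero_iff,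
    Multiset.mem_map, sub_eq_zero, forall_exists_index, and_imp]
  constructor
  · intro h a ha
    obtain ⟨r, hr, hr_neg⟩ := h a a ha rfl
    exact (Complex.ofReal_injective hr) ▸ hr_neg
  · rintro h z a ha rfl
    exact ⟨a, rfl, h a ha⟩

theorem jacobian_reducedMeanField_vbar (l1 l2 g : ℝ) (hl2 : l2 ≠ 0) :
    jacobian (reducedMeanField l1 l2 g) ![0, 1 - 1 / l2, 0] =
      !![l1 / l2 - 1, 0, 0; 1 - l2, 1 - l2, 1 - l2; 1, 0, -g] := by
  rw [jacobian_reducedMeanField]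
  ext i j
  fin_cases i <;> fin_cases j <;> simp <;> field_simp <;> ring

theorem charpoly_jacobian_reducedMeanField_vbar (l1 l2 g : ℝ) (hl2 : l2 ≠ 0) :
    (jacobian (reducedMeanField l1 l2 g) ![0, 1 - 1 / l2, 0]).charpoly =
      (({l1 / l2 - 1, 1 - l2, -g} : Multiset ℝ).map fun a => X - C a).prod := by
  rw [jacobian_reducedMeanField_vbar l1 l2 g hl2, Matrix.charpoly_fin_three_of_eq_zero] <;>
    simp [mul_assoc]

theorem stability_at_vbar_general (l1 l2 g : ℝ)
    (hl2 : 1 < l2) (hg : 0 < g) :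
    let J := jacobian (reducedMeanField l1 l2 g) ![0, 1 - 1 / l2, 0]
    ((∀ z : ℂ, (J.charpoly.map (algebraMap ℝ ℂ)).IsRoot z →
        ∃ r : ℝ, z = (r : ℂ) ∧ r < 0) ↔ l1 < l2) ∧
      (l2 < l1 → ∃ r : ℝ, 0 < r ∧ J.charpoly.IsRoot r) := by
  intro J
  have hl2_pos : 0 < l2 := one_pos.trans hl2
  have hcp : J.charpoly = _ := charpoly_jacobian_reducedMeanField_vbar l1 l2 g hl2_pos.ne'
  refine ⟨?_, fun h => ⟨l1 / l2 - 1, ?_, by simp [hcp]⟩⟩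
  · rw [hcp, Polynomial.isRoot_map_prod_X_sub_C_neg_real_iff]
    simp only [Multiset.insert_eq_cons, Multiset.mem_cons, Multiset.mem_singleton, forall_eq_or_imp,
      forall_eq, sub_neg, div_lt_one hl2_pos, Left.neg_neg_iff]
    exact and_iff_left ⟨hl2, hg⟩
  · rwa [sub_pos, one_lt_div hl2_pos]

theorem stability_at_vbar (l1 l2 g : ℝ)
    (hl1 : 0 < l1) (hl2 : 1 < l2) (hg : 0 < g) :
    let J := jacobian (reducedMeanField l1 l2 g) ![0, 1 - 1 / l2, 0]
    ((∀ z : ℂ, (J.charpoly.map (algebraMap ℝ ℂ)).IsRoot z →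
        ∃ r : ℝ, z = (r : ℂ) ∧ r < 0) ↔ l1 < l2) ∧
      (l2 < l1 → ∃ r : ℝ, 0 < r ∧ J.charpoly.IsRoot r) :=
  stability_at_vbar_general l1 l2 g hl2 hg
end

section
/- Fix reals λ1 > 0, λ2 > 0, γ > 0. If u ∈ Ω is a fixed point of the mean-field vector field F with u2 > 0, then u0 = 1/λ2; if in addition u1 > 0, then also u3 = (λ2 − λ1)/(λ1·λ2) and u1 = γ(λ2 − λ1)/λ1². -/
theorem interior_fixed_point_coordinates (l1 l2 g : ℝ)
    (hl1 : 0 < l1) (hl2 : 0 < l2) (hg : 0 < g)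
    (u : Fin 4 → ℝ) (hu : u ∈ Omega) (hfix : meanField l1 l2 g u = 0)
    (hu2 : 0 < u 2) :
    u 0 = 1 / l2 ∧
      (0 < u 1 → u 3 = (l2 - l1) / (l1 * l2) ∧
        u 1 = g * (l2 - l1) / l1 ^ 2) := by
  have h1 := congrFun hfix 1
  have h2 := congrFun hfix 2
  have h3 := congrFun hfix 3
  simp [meanField] at h1 h2 h3
  have hu0 : u 0 = 1 / l2 := by
    field_simp
    nlinarith [hu2]
  refine ⟨hu0, fun hu1 => ?_⟩
  have hu3 : u 3 = (l2 - l1) / (l1 * l2) := by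
    rw [hu0] at h1
    field_simp
    field_simp at h1
    nlinarith [hu1]
  constructor
  · exact hu3
  · rw [hu3] at h3
    field_simp at h3 ⊢
    nlinarith [hu1, h3]
end

section
/- Fix reals γ > 0 and λ1, λ2 with λ1 > 1, λ2 > λ1 and γλ2 < λ1(λ1+γ−1). Then the point u* = ( 1/λ2, γ(λ2−λ1)/λ1², (λ1(λ1−1) − γ(λ2−λ1))/λ1², (λ2−λ1)/(λ1·λ2) ) has all four coordinates strictly positive, the coordinates sum to 1, F(u*) = 0, and u* is the unique fixed point of F all of whose coordinates are strictly positive and sum to 1. -/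
theorem interior_fixed_point_exists_unique (l1 l2 g : ℝ)
    (hg : 0 < g) (hl1 : 1 < l1) (hl2 : l1 < l2)
    (hcond : g * l2 < l1 * (l1 + g - 1)) :
    let ustar : Fin 4 → ℝ :=
      ![1 / l2, g * (l2 - l1) / l1 ^ 2,
        (l1 * (l1 - 1) - g * (l2 - l1)) / l1 ^ 2, (l2 - l1) / (l1 * l2)]
    (∀ i, 0 < ustar i) ∧
      ustar 0 + ustar 1 + ustar 2 + ustar 3 = 1 ∧
      meanField l1 l2 g ustar = 0 ∧
      ∀ u : Fin 4 → ℝ, meanField l1 l2 g u = 0 → (∀ i, 0 < u i) →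
        u 0 + u 1 + u 2 + u 3 = 1 → u = ustar := by
  intro ustar
  have hl1pos : (0:ℝ) < l1 := lt_trans one_pos hl1
  have hl2pos : (0:ℝ) < l2 := lt_trans hl1pos hl2
  have hl1ne : l1 ≠ 0 := ne_of_gt hl1pos
  have hl2ne : l2 ≠ 0 := ne_of_gt hl2pos
  have hd : l2 - l1 > 0 := by linarith
  have hnum : 0 < l1 * (l1 - 1) - g * (l2 - l1) := by nlinarith
  refine ⟨?_, ?_, ?_, ?_⟩
  · intro i
    fin_cases i <;> simp [ustar] <;> positivity
  · simp only [ustar, Matrix.cons_val_zero, Matrix.cons_val_one, Matrix.head_cons,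
      Matrix.cons_val_two, Matrix.tail_cons, Matrix.cons_val_three]
    field_simp
    ring
  · funext i
    fin_cases i <;> simp [meanField, ustar] <;> field_simp <;> ring
  · intro u hF hpos hsum
    have h0 := congrFun hF 0
    have h1 := congrFun hF 1
    have h2 := congrFun hF 2
    have h3 := congrFun hF 3
    simp [meanField] at h0 h1 h2 h3
    have hu0 : u 0 = 1 / l2 := by
      have := (hpos 2).ne'
      field_simp
      nlinarith [hpos 2]
    have hu3 : u 3 = (l2 - l1) / (l1 * l2) := by
      have h1' : l1 * u 0 + l1 * u 3 = 1 := by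
        have := hpos 1
        nlinarith
      rw [hu0] at h1'
      field_simp at h1' ⊢
      linarith
    have hu1 : u 1 = g * (l2 - l1) / l1 ^ 2 := by
      have key : l1 * l2 * u 3 = l2 - l1 := by
        rw [hu3]; field_simp
      rw [eq_div_iff (by positivity : (l1:ℝ) ^ 2 ≠ 0)]
      linear_combination l1 * l2 * h3 + (l1 * u 1 + g) * key
    have hu2 : u 2 = (l1 * (l1 - 1) - g * (l2 - l1)) / l1 ^ 2 := by
      have : u 2 = 1 - u 0 - u 1 - u 3 := by linarith
      rw [this, hu0, hu1, hu3]
      field_simp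
      ring
    funext i
    fin_cases i <;> simp [ustar, hu0, hu1, hu2, hu3, one_div]
end

section
/- Fix reals λ1 > 0, λ2 > 0, γ > 0. The mean-field vector field F has a fixed point u ∈ ℝ⁴ with all four coordinates strictly positive and summing to 1 if and only if λ1 > 1, λ2 > λ1 and γλ2 < λ1(λ1+γ−1) (in particular, such an interior fixed point exists if and only if λ1 < λ2 < λ1(λ1+γ−1)/γ and λ1 > 1). -/
theorem interior_fixed_point_iff (l1 l2 g : ℝ)
    (hl1 : 0 < l1) (hl2 : 0 < l2) (hg : 0 < g) :
    (∃ u : Fin 4 → ℝ, meanField l1 l2 g u = 0 ∧ (∀ i, 0 < u i) ∧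
        u 0 + u 1 + u 2 + u 3 = 1) ↔
      1 < l1 ∧ l1 < l2 ∧ g * l2 < l1 * (l1 + g - 1) := by
  constructor
  · rintro ⟨u, hF, hpos, hsum⟩
    set a := u 0 with ha'
    set b := u 1 with hb'
    set c := u 2 with hc'
    set d := u 3 with hd'
    have ha : 0 < a := hpos 0
    have hb : 0 < b := hpos 1
    have hc : 0 < c := hpos 2
    have hd : 0 < d := hpos 3
    have h1 : l1 * a * b + l1 * b * d - b = 0 := by
      have := congrFun hF 1; simpa [meanField] using this
    have h2 : l2 * a * c - c = 0 := by
      have := congrFun hF 2; simpa [meanField] using this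
    have h3 : b - l1 * b * d - g * d = 0 := by
      have := congrFun hF 3; simpa [meanField] using this
    -- from h2 : l2 * a = 1
    have e1 : l2 * a = 1 := by
      have : c * (l2 * a - 1) = 0 := by linarith [h2]; 
      rcases mul_eq_zero.mp this with h | h
      · exact absurd h (ne_of_gt hc)
      · linarith
    -- from h1 : l1 * a + l1 * d = 1
    have e2 : l1 * a + l1 * d = 1 := by
      have : b * (l1 * a + l1 * d - 1) = 0 := by nlinarith [h1]
      rcases mul_eq_zero.mp this with h | h
      · exact absurd h (ne_of_gt hb)
      · linarith
    have hl1gt : 1 < l1 := by nlinarith [mul_pos hl1 hb, mul_pos hl1 hc]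
    have hlt : l1 < l2 := by nlinarith [mul_pos hl1 hd]
    refine ⟨hl1gt, hlt, ?_⟩
    have key : a * (l1 * (l1 + g - 1) - g * l2) = l1 ^ 2 * a * c := by
      linear_combination l1 * h3 + (l1 * b + l1 * a + g) * e2 -
        a * l1 ^ 2 * hsum - g * e1
    nlinarith [mul_pos (mul_pos (mul_pos hl1 hl1) ha) hc]
  · rintro ⟨h1, h2, h3⟩
    refine ⟨![1 / l2, g * (l2 - l1) / l1 ^ 2,
      1 - 1 / l1 - g * (l2 - l1) / l1 ^ 2, 1 / l1 - 1 / l2], ?_, ?_, ?_⟩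
    · funext i
      fin_cases i <;> simp [meanField] <;> field_simp <;> ring
    · intro i
      fin_cases i <;> simp
      · exact hl2
      · exact div_pos (mul_pos hg (sub_pos.mpr h2)) (by positivity)
      · rw [div_lt_iff₀ (by positivity : (0:ℝ) < l1 ^ 2)]
        have e : (1 - l1⁻¹) * l1 ^ 2 = l1 ^ 2 - l1 := by field_simp
        rw [e]; nlinarith
      · have := one_div_lt_one_div_of_lt hl1 h2
        simpa [one_div] using this
    · simp; field_simp; ring
end
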